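/- For s > 0, define the quark matter polarization Π̂^{mat}(s) at zero temperature (for chemical potential exceeding quark mass, ζ > ξ > 0) by Π̂^{mat}(s) = c·[ 4√(ζ(ζ−ξ)) + 2s·log(√ξ/(√ζ + √(ζ−ξ))) + s^{−1/2}(2ξ − s)√(s + 4ξ)·log( (√(ζ(s+4ξ)) − √(s(ζ−ξ)))/(√(ζ(s+4ξ)) + √(s(ζ−ξ)) ) ) ] with c = g²C(r)/(12π²) > 0. Then lim_{s→0⁺} Π̂^{mat}(s) = 4c·(ζ−ξ)^{3/2}/√ζ, which is strictly positive. -/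

import Mathlib

/-! Near `s = 0` the argument of the last logarithm is `(1 - y) / (1 + y)` with
`y = √s · √(ζ - ξ) / √(ζ (s + 4ξ)) → 0`, and `log ((1 - y) / (1 + y)) ~ -2y`. So the
`s^{-1/2}`-singular term tends to `2ξ · √(4ξ) · (-2√(ζ - ξ) / √(4ζξ)) = -4ξ√(ζ - ξ)/√ζ`,
which combines with `4√(ζ(ζ - ξ))` into `4(ζ - ξ)^{3/2}/√ζ`. -/

open Filter Topology

/-- The zero-temperature quark matter polarization `Π̂^{mat}(s)` in the
long-wavelength limit, for chemical potential exceeding quark mass (ζ > ξ > 0). -/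
noncomputable def quarkMatterPol (c ζ ξ : ℝ) (s : ℝ) : ℝ :=
  c * (4 * Real.sqrt (ζ * (ζ - ξ))
    + 2 * s * Real.log (Real.sqrt ξ / (Real.sqrt ζ + Real.sqrt (ζ - ξ)))
    + (Real.sqrt s)⁻¹ * (2 * ξ - s) * Real.sqrt (s + 4 * ξ) *
        Real.log ((Real.sqrt (ζ * (s + 4 * ξ)) - Real.sqrt (s * (ζ - ξ))) /
                  (Real.sqrt (ζ * (s + 4 * ξ)) + Real.sqrt (s * (ζ - ξ)))))

open Real

lemma hasDerivAt_log_one_sub_div_one_add :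
    HasDerivAt (fun y : ℝ => log ((1 - y) / (1 + y))) (-2) 0 := by
  have h := (((hasDerivAt_id (0 : ℝ)).const_sub 1).div ((hasDerivAt_id 0).const_add 1)
    (by norm_num)).log (by norm_num)
  convert h using 1 <;> norm_num

lemma tendsto_log_one_sub_div_one_add_div_self :
    Tendsto (fun y : ℝ => log ((1 - y) / (1 + y)) / y) (𝓝[≠] 0) (𝓝 (-2)) := by
  refine hasDerivAt_log_one_sub_div_one_add.tendsto_slope_zero.congr fun y => ?_
  simp [div_eq_inv_mul]

lemma tendsto_inv_sqrt_mul_log_sub_div_add {A : ℝ → ℝ} {a k : ℝ} (ha : a ≠ 0) (hk : k ≠ 0)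
    (hA : Tendsto A (𝓝[>] 0) (𝓝 a)) :
    Tendsto (fun s => (√s)⁻¹ * log ((A s - √s * k) / (A s + √s * k))) (𝓝[>] 0)
      (𝓝 (-2 * k / a)) := by
  set y : ℝ → ℝ := fun s => √s * k / A s
  have hA_ne : ∀ᶠ s in 𝓝[>] 0, A s ≠ 0 := hA.eventually_ne ha
  have hsqrt : Tendsto (fun s : ℝ => √s) (𝓝[>] 0) (𝓝 0) := by
    simpa using (continuous_sqrt.tendsto 0).mono_left nhdsWithin_le_nhds
  have hy : Tendsto y (𝓝[>] 0) (𝓝[≠] 0) := by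
    refine tendsto_nhdsWithin_iff.2 ⟨?_, ?_⟩
    · have h0 : Tendsto y (𝓝[>] 0) (𝓝 (0 * k / a)) := (hsqrt.mul_const k).div hA ha
      simpa using h0
    · filter_upwards [hA_ne, self_mem_nhdsWithin] with s hs hs0
      exact div_ne_zero (mul_ne_zero (sqrt_ne_zero'.2 hs0) hk) hs
  have hlim : Tendsto (fun s => log ((1 - y s) / (1 + y s)) / y s * (k / A s)) (𝓝[>] 0)
      (𝓝 (-2 * (k / a))) :=
    (tendsto_log_one_sub_div_one_add_div_self.comp hy).mul (tendsto_const_nhds.div hA ha)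
  rw [← mul_div_assoc] at hlim
  refine hlim.congr' ?_
  filter_upwards [hA_ne, self_mem_nhdsWithin] with s hs hs0
  have hs_sqrt : 0 < √s := sqrt_pos.2 hs0
  simp only [y]
  rw [one_sub_div hs, one_add_div hs, div_div_div_cancel_right₀ hs]
  field_simp

lemma rpow_three_halves {x : ℝ} (hx : 0 ≤ x) : x ^ ((3 : ℝ) / 2) = x * √x := by
  rw [show (3 : ℝ) / 2 = 1 + 1 / 2 by norm_num, rpow_add' hx (by norm_num), rpow_one,
    ← sqrt_eq_rpow]

/-- The infrared limit of the quark matter polarization: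
`Π̂^{mat}(s) → 4c·(ζ−ξ)^{3/2}/√ζ > 0` as `s → 0⁺`. -/
theorem quarkMatterPol_limit_at_zero (c ζ ξ : ℝ) (hc : 0 < c) (hξ : 0 < ξ) (hζξ : ξ < ζ) :
    Tendsto (quarkMatterPol c ζ ξ) (𝓝[>] (0 : ℝ))
      (𝓝 (4 * c * (ζ - ξ) ^ ((3 : ℝ) / 2) / Real.sqrt ζ)) ∧
    0 < 4 * c * (ζ - ξ) ^ ((3 : ℝ) / 2) / Real.sqrt ζ := by
  have hsub : 0 < ζ - ξ := sub_pos.2 hζξ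
  have hζ : 0 < ζ := hξ.trans hζξ
  have hform : quarkMatterPol c ζ ξ = fun s => c * (4 * √(ζ * (ζ - ξ)) + 2 * s *
      log (√ξ / (√ζ + √(ζ - ξ))) + (2 * ξ - s) * √(s + 4 * ξ) * ((√s)⁻¹ *
        log ((√(ζ * (s + 4 * ξ)) - √s * √(ζ - ξ)) / (√(ζ * (s + 4 * ξ)) + √s * √(ζ - ξ))))) := by
    funext s
    simp only [quarkMatterPol, sqrt_mul' s hsub.le]
    ring
  have hvalue : 4 * c * (ζ - ξ) ^ ((3 : ℝ) / 2) / √ζ =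
      c * (4 * √(ζ * (ζ - ξ)) + 2 * ξ * √(4 * ξ) * (-2 * √(ζ - ξ) / √(ζ * (4 * ξ)))) := by
    rw [rpow_three_halves hsub.le, sqrt_mul hζ.le, sqrt_mul hζ.le]
    field_simp
    rw [sq_sqrt hζ.le]
    ring
  have hA : Tendsto (fun s => √(ζ * (s + 4 * ξ))) (𝓝[>] 0) (𝓝 (√(ζ * (4 * ξ)))) :=
    (Continuous.tendsto' (by fun_prop) 0 _ (by simp)).mono_left nhdsWithin_le_nhds
  have hlog := tendsto_inv_sqrt_mul_log_sub_div_add (sqrt_pos.2 (by positivity)).ne'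
    (sqrt_pos.2 hsub).ne' hA
  refine ⟨?_, by have := rpow_pos_of_pos hsub (3 / 2); positivity⟩
  rw [hform, hvalue]
  refine tendsto_const_nhds.mul (.add ?_ (.mul ?_ hlog)) <;>
    exact (Continuous.tendsto' (by fun_prop) 0 _ (by simp)).mono_left nhdsWithin_le_nhds
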